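/- arXiv:0907.2730 — 2 statements merged into one kernel-verified Lean document; each statement's English description precedes it below -/
import Mathlib

section
/- Let G be a finite connected simple graph and let v₀ be a vertex of G lying on every simple loop of G, i.e., for every vertex u and every closed walk c from u to u in G that is a cycle, v₀ belongs to the support of c. Then G has a spanning tree T — a connected acyclic subgraph of G containing every vertex of G — such that every edge of G not belonging to T is incident to v₀. -/
/-!
Deleting the edges at `v₀` leaves an acyclic graph, because every cycle of `G` passes through
`v₀` and hence uses an edge at `v₀`. Extending this forest to a spanning tree of `G` only adds
edges, so every edge of `G` outside the tree is one of the deleted ones.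
-/

namespace SimpleGraph

variable {V : Type*} {G : SimpleGraph V} {v₀ : V}

lemma isAcyclic_deleteIncidenceSet_of_forall_isCycle_mem_support
    (hv₀ : ∀ (u : V) (c : G.Walk u u), c.IsCycle → v₀ ∈ c.support) :
    (G.deleteIncidenceSet v₀).IsAcyclic := by
  intro u c hc
  have hv₀c : v₀ ∈ c.support := by
    simpa only [Walk.support_mapLe_eq_support] using
      hv₀ u _ (hc.mapLe (G.deleteIncidenceSet_le v₀))
  obtain ⟨e, hec, hv₀e⟩ :=
    (Walk.mem_support_iff_exists_mem_edges_of_not_nil hc.not_nil).mp hv₀c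
  have he : e ∈ G.edgeSet \ G.incidenceSet v₀ := by
    rw [← edgeSet_deleteIncidenceSet]
    exact c.edges_subset_edgeSet hec
  exact he.2 ⟨he.1, hv₀e⟩

end SimpleGraph

theorem exists_spanning_tree_deleted_edges_at_vertex_general {V : Type}
    (G : SimpleGraph V) (hconn : G.Connected) (v₀ : V)
    (hv₀ : ∀ (u : V) (c : G.Walk u u), c.IsCycle → v₀ ∈ c.support) :
    ∃ T : SimpleGraph V, T ≤ G ∧ T.IsTree ∧
      ∀ i j : V, G.Adj i j → ¬ T.Adj i j → v₀ = i ∨ v₀ = j := by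
  obtain ⟨T, hHT, hTG, hT⟩ := hconn.exists_isTree_le_of_le_of_isAcyclic
    (G.deleteIncidenceSet_le v₀)
    (SimpleGraph.isAcyclic_deleteIncidenceSet_of_forall_isCycle_mem_support hv₀)
  refine ⟨T, hTG, hT, fun i j hij hTij => ?_⟩
  by_contra! hi_hj
  exact hTij <| hHT <|
    SimpleGraph.deleteIncidenceSet_adj.mpr ⟨hij, Ne.symm hi_hj.1, Ne.symm hi_hj.2⟩

/-- If `v₀` lies on every simple loop of a finite connected simple graph `G`, then `G`
has a spanning tree `T` (a connected acyclic subgraph on the full vertex set) such that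
every edge of `G` not in `T` is incident to `v₀`. -/
theorem exists_spanning_tree_deleted_edges_at_vertex {V : Type} [Fintype V]
    (G : SimpleGraph V) (hconn : G.Connected) (v₀ : V)
    (hv₀ : ∀ (u : V) (c : G.Walk u u), c.IsCycle → v₀ ∈ c.support) :
    ∃ T : SimpleGraph V, T ≤ G ∧ T.IsTree ∧
      ∀ i j : V, G.Adj i j → ¬ T.Adj i j → v₀ = i ∨ v₀ = j :=
  exists_spanning_tree_deleted_edges_at_vertex_general G hconn v₀ hv₀
end

section
/- Let S be a five-element type with elements named A, B, C, e₁, e₂, and let R ⊆ FreeGroup S consist of the single relator ⁅e₂, A·e₁·A⁻¹⁆ = e₂·A·e₁·A⁻¹·e₂⁻¹·A·e₁⁻¹·A⁻¹. Then the presented group ⟨S ∣ R⟩ is isomorphic to the free product (coproduct of groups) of the free group on three generators, FreeGroup (Fin 3), with the free abelian group ℤ² (i.e., Multiplicative (ℤ × ℤ)). -/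
/-!
Replacing the generator `e₁` by its conjugate `e₁' = A e₁ A⁻¹` is a Tietze move, after which the
relator just says that `e₁'` and `e₂` commute and involves no other generator. The group is
therefore the free group on `A, B, C` freely multiplied by the free abelian group on `e₁', e₂`.
-/

/-- A five-element generating set `{A, B, C, e₁, e₂}`. -/
inductive FiveGen : Type
  | A : FiveGen
  | B : FiveGen
  | C : FiveGen
  | e₁ : FiveGen
  | e₂ : FiveGen

open FiveGen in
open scoped commutatorElement in
/-- The single relator `⁅e₂, A e₁ A⁻¹⁆`. -/
def fiveRel : Set (FreeGroup FiveGen) :=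
  {⁅FreeGroup.of e₂, FreeGroup.of A * FreeGroup.of e₁ * (FreeGroup.of A)⁻¹⁆}

open Multiplicative
open scoped commutatorElement

section CommutingPair

variable {G : Type*} [Group G]

def Commute.zpowPairHom {x y : G} (h : Commute x y) : Multiplicative (ℤ × ℤ) →* G :=
  (MonoidHom.noncommCoprod (zpowersHom G x) (zpowersHom G y)
      fun m n => h.zpow_zpow m.toAdd n.toAdd).comp
    (MulEquiv.prodMultiplicative ℤ ℤ).toMonoidHom

theorem Commute.zpowPairHom_apply {x y : G} (h : Commute x y) (z : Multiplicative (ℤ × ℤ)) :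
    h.zpowPairHom z = x ^ z.toAdd.1 * y ^ z.toAdd.2 :=
  rfl

theorem MonoidHom.ext_multiplicative_int_prod {φ ψ : Multiplicative (ℤ × ℤ) →* G}
    (h₁ : φ (ofAdd (1, 0)) = ψ (ofAdd (1, 0))) (h₂ : φ (ofAdd (0, 1)) = ψ (ofAdd (0, 1))) :
    φ = ψ := by
  refine MonoidHom.ext fun z => ?_
  have hz : z = ofAdd (1, 0) ^ z.toAdd.1 * ofAdd (0, 1) ^ z.toAdd.2 := by
    simp [← ofAdd_zsmul, ← ofAdd_add]
  rw [hz, map_mul, map_mul, map_zpow, map_zpow, map_zpow, map_zpow, h₁, h₂]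

end CommutingPair

theorem PresentedGroup.commute_of_commutatorElement_mem {α : Type*} {rels : Set (FreeGroup α)}
    {u v : FreeGroup α} (h : ⁅u, v⁆ ∈ rels) :
    Commute (PresentedGroup.mk rels u) (PresentedGroup.mk rels v) := by
  rw [← commutatorElement_eq_one_iff_commute, ← map_commutatorElement]
  exact PresentedGroup.one_of_mem h

namespace FiveGen

open Monoid

abbrev FreeProd : Type := Coprod (FreeGroup (Fin 3)) (Multiplicative (ℤ × ℤ))

def toFreeProd : FiveGen → FreeProd
  | A => Coprod.inl (FreeGroup.of 0)
  | B => Coprod.inl (FreeGroup.of 1)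
  | C => Coprod.inl (FreeGroup.of 2)
  | e₁ =>
    (Coprod.inl (FreeGroup.of 0))⁻¹ * Coprod.inr (ofAdd (1, 0)) * Coprod.inl (FreeGroup.of 0)
  | e₂ => Coprod.inr (ofAdd (0, 1))

theorem lift_toFreeProd_conj_e₁ :
    FreeGroup.lift toFreeProd (FreeGroup.of A * FreeGroup.of e₁ * (FreeGroup.of A)⁻¹) =
      Coprod.inr (ofAdd (1, 0)) := by
  simp only [map_mul, map_inv, FreeGroup.lift_apply_of, toFreeProd]
  group

theorem lift_toFreeProd_eq_one : ∀ r ∈ fiveRel, FreeGroup.lift toFreeProd r = 1 := by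
  rintro _ rfl
  rw [map_commutatorElement, lift_toFreeProd_conj_e₁, FreeGroup.lift_apply_of,
    commutatorElement_eq_one_iff_commute]
  exact (Commute.all _ _).map Coprod.inr

noncomputable def toFreeProdHom : PresentedGroup fiveRel →* FreeProd :=
  PresentedGroup.toGroup lift_toFreeProd_eq_one

theorem toFreeProdHom_of (s : FiveGen) : toFreeProdHom (PresentedGroup.of s) = toFreeProd s :=
  PresentedGroup.toGroup.of _

noncomputable def conjE₁ : PresentedGroup fiveRel :=
  PresentedGroup.of A * PresentedGroup.of e₁ * (PresentedGroup.of A)⁻¹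

theorem toFreeProdHom_conjE₁ : toFreeProdHom conjE₁ = Coprod.inr (ofAdd (1, 0)) :=
  lift_toFreeProd_conj_e₁

theorem commute_conjE₁_e₂ : Commute conjE₁ (PresentedGroup.of e₂) :=
  (PresentedGroup.commute_of_commutatorElement_mem (rels := fiveRel) rfl).symm

noncomputable def ofFreeProdHom : FreeProd →* PresentedGroup fiveRel :=
  Coprod.lift
    (FreeGroup.lift ![PresentedGroup.of A, PresentedGroup.of B, PresentedGroup.of C])
    commute_conjE₁_e₂.zpowPairHom

theorem ofFreeProdHom_comp_toFreeProdHom :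
    ofFreeProdHom.comp toFreeProdHom = MonoidHom.id _ := by
  refine PresentedGroup.ext fun s => ?_
  cases s with
  | e₁ =>
    simp only [MonoidHom.comp_apply, toFreeProdHom_of, toFreeProd, ofFreeProdHom, map_mul, map_inv,
      Coprod.lift_apply_inl, Coprod.lift_apply_inr, FreeGroup.lift_apply_of,
      Commute.zpowPairHom_apply]
    simp [conjE₁, mul_assoc]
  | _ => simp [ofFreeProdHom, toFreeProdHom_of, toFreeProd, Commute.zpowPairHom_apply]

theorem toFreeProdHom_comp_ofFreeProdHom :
    toFreeProdHom.comp ofFreeProdHom = MonoidHom.id _ := by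
  refine Coprod.hom_ext (FreeGroup.ext_hom _ _ fun i => ?_) ?_
  · fin_cases i <;> simp [ofFreeProdHom, toFreeProdHom_of, toFreeProd]
  · refine MonoidHom.ext_multiplicative_int_prod ?_ ?_ <;>
      simp [ofFreeProdHom, Commute.zpowPairHom_apply, toFreeProdHom_conjE₁, toFreeProdHom_of,
        toFreeProd]

end FiveGen

/-- The group `⟨A, B, C, e₁, e₂ ∣ [e₂, A e₁ A⁻¹]⟩` is isomorphic to the free product
`F₃ ∗ ℤ²`. -/
theorem presentedGroup_five_gen_one_commutator_relator :
    Nonempty (PresentedGroup fiveRel ≃*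
      Monoid.Coprod (FreeGroup (Fin 3)) (Multiplicative (ℤ × ℤ))) :=
  ⟨MonoidHom.toMulEquiv _ _ FiveGen.ofFreeProdHom_comp_toFreeProdHom
    FiveGen.toFreeProdHom_comp_ofFreeProdHom⟩
end
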